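/- For integers k ≥ 0 and n ≥ l ≥ k+1, op_{n+1,k+1,=l+1}^{k+2} = op_{n,k,=l}^{k+1} + op_{n,k+1,=l}^{k+1} + op_{n,k+1,=l}^{k+2}. -/

import Mathlib

/-- The first unoccupied parking space `j` with `p ≤ j ≤ n`, if any. -/
def firstFree (n : ℕ) (occ : Finset ℕ) (p : ℕ) : Option ℕ :=
  (List.range' p (n + 1 - p)).find? (fun j => decide (j ∉ occ))

/-- Number of cars that fail to park, processing the preference list in order,
given the set of already occupied spaces. -/
def flawsFrom (n : ℕ) : List ℕ → Finset ℕ → ℕ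
  | [], _ => 0
  | p :: rest, occ =>
    match firstFree n occ p with
    | none => flawsFrom n rest occ + 1
    | some j => flawsFrom n rest (insert j occ)

/-- The number of flaws (unparked cars) of a preference list of length `n`. -/
def flaws (n : ℕ) (a : List ℕ) : ℕ := flawsFrom n a ∅

/-- A preference set of length `n`: a list of length `n` with entries in `{1, …, n}`. -/
def IsPrefSet (n : ℕ) (a : List ℕ) : Prop :=
  a.length = n ∧ ∀ x ∈ a, 1 ≤ x ∧ x ≤ n

/-- An ordered preference set of length `n`: a nondecreasing preference set. -/
def IsOrderedPrefSet (n : ℕ) (a : List ℕ) : Prop :=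
  IsPrefSet n a ∧ a.Pairwise (· ≤ ·)

/-- `op_{n,≥k}`: number of ordered preference sets of length `n` with at least `k` flaws. -/
noncomputable def opGe (n k : ℕ) : ℕ :=
  {a : List ℕ | IsOrderedPrefSet n a ∧ k ≤ flaws n a}.ncard

/-- `op_{n,≤k}`: number of ordered preference sets of length `n` with at most `k` flaws. -/
noncomputable def opLe (n k : ℕ) : ℕ :=
  {a : List ℕ | IsOrderedPrefSet n a ∧ flaws n a ≤ k}.ncard

/-- `op_{n,k}`: number of ordered preference sets of length `n` with exactly `k` flaws. -/
noncomputable def opEq (n k : ℕ) : ℕ :=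
  {a : List ℕ | IsOrderedPrefSet n a ∧ flaws n a = k}.ncard

/-- `op_{n,≥k,≤l}`: at least `k` flaws, every entry at most `l`. -/
noncomputable def opGeLe (n k l : ℕ) : ℕ :=
  {a : List ℕ | IsOrderedPrefSet n a ∧ k ≤ flaws n a ∧ ∀ x ∈ a, x ≤ l}.ncard

/-- `op_{n,≥k,≤l}^m`: at least `k` flaws, every entry at most `l`, leading term `m`. -/
noncomputable def opGeLeLead (n k l m : ℕ) : ℕ :=
  {a : List ℕ | IsOrderedPrefSet n a ∧ k ≤ flaws n a ∧ (∀ x ∈ a, x ≤ l) ∧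
    a.head? = some m}.ncard

/-- `op_{n,k,≤l}^m`: exactly `k` flaws, every entry at most `l`, leading term `m`. -/
noncomputable def opEqLeLead (n k l m : ℕ) : ℕ :=
  {a : List ℕ | IsOrderedPrefSet n a ∧ flaws n a = k ∧ (∀ x ∈ a, x ≤ l) ∧
    a.head? = some m}.ncard

/-- `op_{n,k}^m`: exactly `k` flaws, leading term `m`. -/
noncomputable def opLead (n k m : ℕ) : ℕ :=
  {a : List ℕ | IsOrderedPrefSet n a ∧ flaws n a = k ∧ a.head? = some m}.ncard

/-- `op_{n,k,=l}^m`: exactly `k` flaws, maximal entry exactly `l`, leading term `m`. -/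
noncomputable def opMaxLead (n k l m : ℕ) : ℕ :=
  {a : List ℕ | IsOrderedPrefSet n a ∧ flaws n a = k ∧ (∀ x ∈ a, x ≤ l) ∧ l ∈ a ∧
    a.head? = some m}.ncard

/-- Binomial coefficient `C(a, b)` with an integer lower index, which is `0`
when `b < 0` (the standard convention). -/
def chooseInt (a : ℕ) (b : ℤ) : ℕ := if 0 ≤ b then a.choose b.toNat else 0

/-!
An ordered preference set with leading term `k + 2` is `(k + 2) :: (b + 1)` for an ordered list
`b` of length `n`. For nondecreasing preferences the occupied spaces at or above the current
preference are exactly those up to some `t`, so parking reduces to tracking `t`; after the first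
car, `b + 1` parks in `n + 1` spaces exactly as `b` parks in `n` spaces with `1, …, k + 1` taken.
For `n` cars in `n` spaces, starting with `t' ≥ t` spaces taken yields `max (flaws from t) t'`
flaws, and a first entry `m` forces at least `m - 1` flaws. Hence `b` has `k + 1` flaws from
`t = k + 1` exactly when it starts at `k + 1` with `k` or `k + 1` flaws, or at `k + 2` with
`k + 1` flaws: these are the three terms on the right.
-/

-- For nondecreasing preferences the spaces taken at or above the current preference are
-- exactly those `≤ t`, so `t` is the whole state of the parking process.
def sortedFlaws (n : ℕ) : List ℕ → ℕ → ℕ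
  | [], _ => 0
  | p :: rest, t =>
    if max p (t + 1) ≤ n then sortedFlaws n rest (max p (t + 1)) else sortedFlaws n rest t + 1

lemma find?_range'_notMem {occ : Finset ℕ} {t : ℕ} :
    ∀ {len s : ℕ}, (∀ j, s ≤ j → j < s + len → (j ∈ occ ↔ j ≤ t)) →
      (List.range' s len).find? (fun j => decide (j ∉ occ)) =
        if max s (t + 1) < s + len then some (max s (t + 1)) else none
  | 0, s, _ => by simp
  | len + 1, s, h => by
    rw [List.range'_succ]
    by_cases hst : s ≤ t
    · rw [List.find?_cons_of_neg (by simpa using (h s le_rfl (by omega)).2 hst),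
        find?_range'_notMem fun j h₁ h₂ => h j (by omega) (by omega)]
      grind
    · rw [List.find?_cons_of_pos (by simpa using mt (h s le_rfl (by omega)).1 hst)]
      grind

lemma firstFree_eq_of_forall_mem_iff {n t p : ℕ} {occ : Finset ℕ}
    (h : ∀ j, p ≤ j → (j ∈ occ ↔ j ≤ t)) :
    firstFree n occ p = if max p (t + 1) ≤ n then some (max p (t + 1)) else none := by
  rw [firstFree, find?_range'_notMem fun j hj _ => h j hj]
  grind

lemma flawsFrom_eq_sortedFlaws (n : ℕ) :
    ∀ {a : List ℕ} {occ : Finset ℕ} {c t : ℕ}, a.Pairwise (· ≤ ·) → (∀ x ∈ a, c ≤ x) →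
      (∀ j, c ≤ j → (j ∈ occ ↔ j ≤ t)) → flawsFrom n a occ = sortedFlaws n a t
  | [], _, _, _, _, _, _ => rfl
  | p :: rest, occ, c, t, hs, hc, hocc => by
    have hp : ∀ j, p ≤ j → (j ∈ occ ↔ j ≤ t) := fun j hj => hocc j ((hc p (by simp)).trans hj)
    have hrest : ∀ x ∈ rest, p ≤ x := fun x hx => List.rel_of_pairwise_cons hs hx
    rw [flawsFrom, sortedFlaws, firstFree_eq_of_forall_mem_iff hp]
    split_ifs
    · refine flawsFrom_eq_sortedFlaws n hs.of_cons hrest fun j hj => ?_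
      rw [Finset.mem_insert, hp j hj]
      omega
    · rw [flawsFrom_eq_sortedFlaws n hs.of_cons hrest hp]

lemma flaws_eq_sortedFlaws {n t : ℕ} {a : List ℕ} (hs : a.Pairwise (· ≤ ·))
    (ht : ∀ x ∈ a, t < x) : flaws n a = sortedFlaws n a t :=
  flawsFrom_eq_sortedFlaws n hs ht (by simp)

lemma sortedFlaws_le_length (n : ℕ) : ∀ (a : List ℕ) (t : ℕ), sortedFlaws n a t ≤ a.length
  | [], _ => le_rfl
  | p :: rest, t => by
    have := sortedFlaws_le_length n rest
    rw [sortedFlaws]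
    split_ifs <;> grind

lemma sortedFlaws_eq_max (n : ℕ) : ∀ (a : List ℕ) {t t' : ℕ}, t ≤ t' → t' ≤ n →
    sortedFlaws n a t' = max (sortedFlaws n a t) (a.length + t' - n)
  | [], _, _, _, _ => by simp [sortedFlaws]; omega
  | p :: rest, t, t', htt, ht' => by
    have hlen := sortedFlaws_le_length n rest
    simp only [sortedFlaws, List.length_cons]
    by_cases h' : max p (t' + 1) ≤ n
    · rw [if_pos h', if_pos (by omega),
        sortedFlaws_eq_max n rest (by omega : max p (t + 1) ≤ max p (t' + 1)) h']
      -- if `p > t' + 1` both sides restart at `p`; the needed lower bound is the case `t = t'`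
      have hp := sortedFlaws_eq_max n rest (le_refl p)
      grind
    · rw [if_neg h']
      by_cases h : max p (t + 1) ≤ n
      · rw [if_pos h, sortedFlaws_eq_max n rest (by omega : max p (t + 1) ≤ t') ht']
        grind
      · rw [if_neg h, sortedFlaws_eq_max n rest htt ht']
        omega

lemma le_sortedFlaws (n : ℕ) (a : List ℕ) {t : ℕ} (ht : t ≤ n) :
    a.length + t - n ≤ sortedFlaws n a t := by
  rw [sortedFlaws_eq_max n a le_rfl ht]
  exact le_max_right _ _

lemma sortedFlaws_map_succ (n : ℕ) : ∀ (a : List ℕ) (t : ℕ),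
    sortedFlaws (n + 1) (a.map (· + 1)) (t + 1) = sortedFlaws n a t
  | [], _ => rfl
  | p :: rest, t => by
    simp only [List.map_cons, sortedFlaws,
      show max (p + 1) (t + 1 + 1) = max p (t + 1) + 1 by omega,
      add_le_add_iff_right, sortedFlaws_map_succ n rest]

lemma finite_setOf_isPrefSet (n : ℕ) : {a : List ℕ | IsPrefSet n a}.Finite := by
  refine ((List.finite_length_eq (Fin (n + 1)) n).image (List.map Fin.val)).subset ?_
  rintro a ⟨hlen, hbd⟩
  refine ⟨a.pmap (fun x hx => (⟨x, Nat.lt_succ_of_le hx⟩ : Fin (n + 1))) fun x hx => (hbd x hx).2,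
    by simp [hlen], ?_⟩
  simp [List.map_pmap]

lemma le_of_head?_eq {a : List ℕ} {m : ℕ} (hs : a.Pairwise (· ≤ ·)) (hh : a.head? = some m) :
    ∀ x ∈ a, m ≤ x := by
  obtain ⟨rest, rfl⟩ := List.head?_eq_some_iff.1 hh
  simpa using (List.pairwise_cons.1 hs).1

def consSucc (m : ℕ) (b : List ℕ) : List ℕ := (m + 1) :: b.map (· + 1)

lemma consSucc_injective (m : ℕ) : Function.Injective (consSucc m) := by
  intro b c h
  simp only [consSucc, List.cons.injEq, true_and] at h
  exact List.map_injective_iff.2 (add_left_injective 1) h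

lemma mem_range_consSucc {a : List ℕ} {m : ℕ} (hs : a.Pairwise (· ≤ ·))
    (hh : a.head? = some (m + 1)) : a ∈ Set.range (consSucc m) := by
  have hge := le_of_head?_eq hs hh
  obtain ⟨rest, rfl⟩ := List.head?_eq_some_iff.1 hh
  refine ⟨rest.map (· - 1), ?_⟩
  simp only [consSucc, List.map_map, List.cons.injEq, true_and]
  conv_rhs => rw [← List.map_id rest]
  exact List.map_congr_left fun x hx => by have := hge x (by simp [hx]); simp; omega

lemma isOrderedPrefSet_consSucc_iff {n m : ℕ} {b : List ℕ} (hm : 1 ≤ m) (hmn : m ≤ n) :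
    IsOrderedPrefSet (n + 1) (consSucc m b) ↔ IsOrderedPrefSet n b ∧ ∀ x ∈ b, m ≤ x := by
  simp only [IsOrderedPrefSet, IsPrefSet, consSucc, List.length_cons, List.length_map,
    List.forall_mem_cons, List.forall_mem_map, List.pairwise_cons, List.pairwise_map]
  constructor
  · rintro ⟨⟨hlen, -, hbd⟩, hge, hs⟩
    exact ⟨⟨⟨by omega, fun x hx => by grind⟩, by simpa using hs⟩, fun x hx => by grind⟩
  · rintro ⟨⟨⟨hlen, hbd⟩, hs⟩, hge⟩
    exact ⟨⟨by omega, by omega, fun x hx => by grind⟩, fun x hx => by grind, by simpa using hs⟩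

lemma flaws_consSucc {n m : ℕ} {b : List ℕ} (hs : b.Pairwise (· ≤ ·)) (hb : ∀ x ∈ b, m ≤ x)
    (hm : m ≤ n) : flaws (n + 1) (consSucc m b) = sortedFlaws n b m := by
  have hs' : (consSucc m b).Pairwise (· ≤ ·) := by
    simp only [consSucc, List.pairwise_cons, List.forall_mem_map, List.pairwise_map]
    exact ⟨fun x hx => by grind, by simpa using hs⟩
  rw [flaws_eq_sortedFlaws (t := 0) hs' (by simp [consSucc]), consSucc, sortedFlaws,
    if_pos (by omega), show max (m + 1) (0 + 1) = m + 1 by omega, sortedFlaws_map_succ]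

lemma le_head_and_sortedFlaws_eq_iff {n k m : ℕ} {b : List ℕ} (hb : IsOrderedPrefSet n b)
    (hh : b.head? = some m) (hk : k + 1 ≤ n) :
    (k + 1 ≤ m ∧ sortedFlaws n b (k + 1) = k + 1) ↔
      (m = k + 1 ∧ (flaws n b = k ∨ flaws n b = k + 1)) ∨ (m = k + 2 ∧ flaws n b = k + 1) := by
  obtain ⟨⟨hlen, hbd⟩, hs⟩ := hb
  have hge := le_of_head?_eq hs hh
  have hmn : m ≤ n := (hbd m (List.mem_of_mem_head? hh)).2
  have hflaws : ∀ t < m, flaws n b = sortedFlaws n b t := fun t ht =>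
    flaws_eq_sortedFlaws hs fun x hx => ht.trans_le (hge x hx)
  have hlow : ∀ t ≤ n, t ≤ sortedFlaws n b t := fun t ht => by
    simpa [hlen] using le_sortedFlaws n b ht
  rcases lt_trichotomy m (k + 1) with h | rfl | h
  · omega
  · have hmax := sortedFlaws_eq_max n b (Nat.le_add_right k 1) hk
    rw [hlen, Nat.add_sub_cancel_left] at hmax
    have := hflaws k (by omega)
    have := hlow k (by omega)
    omega
  · have := hflaws (k + 1) h
    have := hflaws (m - 1) (by omega)
    have := hlow (m - 1) (by omega)
    omega

def maxLeadSet (n k l m : ℕ) : Set (List ℕ) :=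
  {a | IsOrderedPrefSet n a ∧ flaws n a = k ∧ (∀ x ∈ a, x ≤ l) ∧ l ∈ a ∧ a.head? = some m}

lemma opMaxLead_eq_ncard (n k l m : ℕ) : opMaxLead n k l m = (maxLeadSet n k l m).ncard := rfl

lemma maxLeadSet_finite (n k l m : ℕ) : (maxLeadSet n k l m).Finite :=
  (finite_setOf_isPrefSet n).subset fun _ ha => ha.1.1

lemma consSucc_mem_maxLeadSet_iff {n k l : ℕ} {b : List ℕ} (hl : k + 1 ≤ l) (hn : l ≤ n) :
    consSucc (k + 1) b ∈ maxLeadSet (n + 1) (k + 1) (l + 1) (k + 2) ↔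
      b ∈ maxLeadSet n k l (k + 1) ∪ maxLeadSet n (k + 1) l (k + 1) ∪
        maxLeadSet n (k + 1) l (k + 2) := by
  have hkn : k + 1 ≤ n := hl.trans hn
  constructor
  · rintro ⟨hord, hfl, hle, hmem, -⟩
    obtain ⟨hb, hge⟩ := (isOrderedPrefSet_consSucc_iff (by omega) hkn).1 hord
    rw [flaws_consSucc hb.2 hge hkn] at hfl
    have hble : ∀ x ∈ b, x ≤ l := fun x hx => by
      simpa using hle (x + 1) (by simp [consSucc, hx])
    obtain ⟨m, rest, rfl⟩ := List.exists_cons_of_length_pos (by rw [hb.1.1]; omega)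
    -- if `l + 1` is only the leading entry, then `b` is squeezed between `k + 1 = l` and `l`
    have hlb : l ∈ m :: rest := by
      rcases List.mem_cons.1 hmem with h | h
      · have := hge m (by simp)
        have := hble m (by simp)
        exact List.mem_cons.2 (Or.inl (by omega))
      · simpa using h
    rcases (le_head_and_sortedFlaws_eq_iff hb rfl hkn).1 ⟨hge m (by simp), hfl⟩ with
      ⟨rfl, hf | hf⟩ | ⟨rfl, hf⟩
    · exact Or.inl (Or.inl ⟨hb, hf, hble, hlb, rfl⟩)
    · exact Or.inl (Or.inr ⟨hb, hf, hble, hlb, rfl⟩)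
    · exact Or.inr ⟨hb, hf, hble, hlb, rfl⟩
  · intro h
    obtain ⟨m, hb, hble, hlb, hh, hcases⟩ : ∃ m, IsOrderedPrefSet n b ∧ (∀ x ∈ b, x ≤ l) ∧ l ∈ b ∧
        b.head? = some m ∧ ((m = k + 1 ∧ (flaws n b = k ∨ flaws n b = k + 1)) ∨
          (m = k + 2 ∧ flaws n b = k + 1)) := by
      rcases h with (⟨hb, hf, hble, hlb, hh⟩ | ⟨hb, hf, hble, hlb, hh⟩) | ⟨hb, hf, hble, hlb, hh⟩
      exacts [⟨_, hb, hble, hlb, hh, Or.inl ⟨rfl, Or.inl hf⟩⟩,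
        ⟨_, hb, hble, hlb, hh, Or.inl ⟨rfl, Or.inr hf⟩⟩, ⟨_, hb, hble, hlb, hh, Or.inr ⟨rfl, hf⟩⟩]
    obtain ⟨hkm, hfl⟩ := (le_head_and_sortedFlaws_eq_iff hb hh hkn).2 hcases
    have hge : ∀ x ∈ b, k + 1 ≤ x := fun x hx => hkm.trans (le_of_head?_eq hb.2 hh x hx)
    refine ⟨(isOrderedPrefSet_consSucc_iff (by omega) hkn).2 ⟨hb, hge⟩,
      (flaws_consSucc hb.2 hge hkn).trans hfl, ?_, ?_, rfl⟩
    · simp only [consSucc, List.mem_cons, List.mem_map]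
      rintro x (rfl | ⟨y, hy, rfl⟩) <;> grind
    · exact List.mem_cons_of_mem _ (List.mem_map_of_mem hlb)

theorem stmt15 (n k l : ℕ) (hl : k + 1 ≤ l) (hn : l ≤ n) :
    opMaxLead (n + 1) (k + 1) (l + 1) (k + 2)
      = opMaxLead n k l (k + 1) + opMaxLead n (k + 1) l (k + 1)
        + opMaxLead n (k + 1) l (k + 2) := by
  simp only [opMaxLead_eq_ncard]
  set A := maxLeadSet n k l (k + 1)
  set B := maxLeadSet n (k + 1) l (k + 1)
  set C := maxLeadSet n (k + 1) l (k + 2)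
  have hS : maxLeadSet (n + 1) (k + 1) (l + 1) (k + 2) = consSucc (k + 1) '' (A ∪ B ∪ C) := by
    refine (Set.image_preimage_eq_of_subset fun a ha =>
      mem_range_consSucc ha.1.2 ha.2.2.2.2).symm.trans (congrArg _ ?_)
    ext b
    exact consSucc_mem_maxLeadSet_iff hl hn
  have hAB : Disjoint A B := Set.disjoint_left.2 fun b hA hB => by
    have := hA.2.1.symm.trans hB.2.1
    omega
  have hABC : Disjoint (A ∪ B) C := Set.disjoint_left.2 fun b hAB hC => by
    rcases hAB with h | h <;> simpa using h.2.2.2.2.symm.trans hC.2.2.2.2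
  rw [hS, Set.ncard_image_of_injective _ (consSucc_injective _),
    Set.ncard_union_eq hABC ((maxLeadSet_finite ..).union (maxLeadSet_finite ..))
      (maxLeadSet_finite ..),
    Set.ncard_union_eq hAB (maxLeadSet_finite ..) (maxLeadSet_finite ..)]
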